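/- (Correctness of the reduction UFL ∝ UMPLS, Theorem 1.) For every UFL instance and every bound K'' with K'' < Ω, the UFL instance has a feasible solution with cost at most K'' if and only if the UMPLS instance constructed from it has a feasible solution with cost at most K''. -/
import Mathlib


open Finset

noncomputable section

/-- Plants of the UMPLS instance built from a UFL instance:
one plant per facility (`Sum.inl`) and one per client (`Sum.inr`). -/
abbrev Plant (NS NC : ℕ) := Fin NS ⊕ Fin NC

/-- Feasibility of a single-item single-period UMPLS solution. -/
def umplsFeasible {P : Type} [Fintype P] [DecidableEq P]
    (d : P → ℝ) (x s : P → ℝ) (w : P → P → ℝ) (y : P → ℝ) (Y : P → P → ℝ) : Prop :=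
  (∀ p, 0 ≤ x p) ∧ (∀ p, 0 ≤ s p) ∧ (∀ p l, 0 ≤ w p l) ∧
  (∀ p, w p p = 0) ∧
  (∀ p, x p + ∑ l ∈ univ.erase p, w l p = s p + ∑ l ∈ univ.erase p, w p l + d p) ∧
  (∀ p, y p = 0 ∨ y p = 1) ∧
  (∀ p l, Y p l = 0 ∨ Y p l = 1) ∧
  (∀ p, 0 < x p → y p = 1) ∧
  (∀ p l, 0 < w p l → Y p l = 1)

/-- Cost of a single-item single-period UMPLS solution. -/
def umplsCost {P : Type} [Fintype P] [DecidableEq P]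
    (c f h : P → ℝ) (r F : P → P → ℝ)
    (x s : P → ℝ) (w : P → P → ℝ) (y : P → ℝ) (Y : P → P → ℝ) : ℝ :=
  (∑ p, (c p * x p + f p * y p + h p * s p))
    + ∑ p, ∑ l ∈ univ.erase p, (r p l * w p l + F p l * Y p l)

/-- `Ω = (max_j q j + max_{l,j} v l j) * (NC + 1)`. -/
def Omega (NS NC : ℕ) (q : Fin NS → ℝ) (v : Fin NC → Fin NS → ℝ) : ℝ :=
  ((⨆ j, q j) + (⨆ l, ⨆ j, v l j)) * (NC + 1)

/-- Demands of the constructed UMPLS instance. -/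
def redD (NS NC : ℕ) : Plant NS NC → ℝ
  | Sum.inl _ => 0
  | Sum.inr _ => 1

/-- Setup costs of the constructed UMPLS instance. -/
def redF (NS NC : ℕ) (q : Fin NS → ℝ) (v : Fin NC → Fin NS → ℝ) : Plant NS NC → ℝ
  | Sum.inl j => q j
  | Sum.inr _ => Omega NS NC q v

/-- Unit production costs of the constructed UMPLS instance. -/
def redC (NS NC : ℕ) (q : Fin NS → ℝ) (v : Fin NC → Fin NS → ℝ) : Plant NS NC → ℝ
  | Sum.inl _ => 0
  | Sum.inr _ => Omega NS NC q v

/-- Holding costs of the constructed UMPLS instance. -/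
def redH (NS NC : ℕ) : Plant NS NC → ℝ := fun _ => 0

/-- Unit transfer costs of the constructed UMPLS instance:
`v l j` on facility→client arcs and `Ω` on every other ordered pair of distinct plants. -/
def redR (NS NC : ℕ) (q : Fin NS → ℝ) (v : Fin NC → Fin NS → ℝ) :
    Plant NS NC → Plant NS NC → ℝ
  | Sum.inl j, Sum.inr l => v l j
  | _, _ => Omega NS NC q v

/-- Fixed transfer costs of the constructed UMPLS instance (all zero). -/
def redFix (NS NC : ℕ) : Plant NS NC → Plant NS NC → ℝ := fun _ _ => 0

/-- Cost of a UFL solution given by the open set `S'` and the assignment `a`. -/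
def uflCost (NS NC : ℕ) (q : Fin NS → ℝ) (v : Fin NC → Fin NS → ℝ)
    (S' : Finset (Fin NS)) (a : Fin NC → Fin NS) : ℝ :=
  ∑ j ∈ S', q j + ∑ l, v l (a l)

section Aux

variable {NS NC : ℕ} {q : Fin NS → ℝ} {v : Fin NC → Fin NS → ℝ}

lemma omega_nonneg (hq : ∀ j, 0 ≤ q j) (hv : ∀ l j, 0 ≤ v l j) :
    0 ≤ Omega NS NC q v := by
  have h1 : 0 ≤ ⨆ j, q j := Real.iSup_nonneg hq
  have h2 : 0 ≤ ⨆ l, ⨆ j, v l j := Real.iSup_nonneg fun l => Real.iSup_nonneg (hv l)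
  have h3 : (0:ℝ) ≤ (NC:ℝ) + 1 := by positivity
  exact mul_nonneg (add_nonneg h1 h2) h3

lemma v_le_vmax (l : Fin NC) (j : Fin NS) : v l j ≤ ⨆ l, ⨆ j, v l j :=
  le_trans (le_ciSup (Finite.bddAbove_range _) j)
    (le_ciSup (f := fun l => ⨆ j, v l j) (Finite.bddAbove_range _) l)

lemma vmax_le_omega (hq : ∀ j, 0 ≤ q j) (hv : ∀ l j, 0 ≤ v l j) :
    (⨆ l, ⨆ j, v l j) ≤ Omega NS NC q v := by
  have h1 : 0 ≤ ⨆ j, q j := Real.iSup_nonneg hq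
  have h2 : 0 ≤ ⨆ l, ⨆ j, v l j := Real.iSup_nonneg fun l => Real.iSup_nonneg (hv l)
  have h3 : (0:ℝ) ≤ (NC:ℝ) := by positivity
  unfold Omega
  nlinarith

lemma sum_erase_eq_sum {P : Type} [Fintype P] [DecidableEq P] (g : P → ℝ) (p : P)
    (h : g p = 0) : ∑ l ∈ univ.erase p, g l = ∑ l, g l :=
  Finset.sum_erase _ h

end Aux

section Red

variable {NS NC : ℕ} {q : Fin NS → ℝ} {v : Fin NC → Fin NS → ℝ}

@[simp] lemma redD_inl (j : Fin NS) : redD NS NC (Sum.inl j) = 0 := rfl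
@[simp] lemma redD_inr (l : Fin NC) : redD NS NC (Sum.inr l) = 1 := rfl
@[simp] lemma redF_inl (j : Fin NS) : redF NS NC q v (Sum.inl j) = q j := rfl
@[simp] lemma redF_inr (l : Fin NC) : redF NS NC q v (Sum.inr l) = Omega NS NC q v := rfl
@[simp] lemma redC_inl (j : Fin NS) : redC NS NC q v (Sum.inl j) = 0 := rfl
@[simp] lemma redC_inr (l : Fin NC) : redC NS NC q v (Sum.inr l) = Omega NS NC q v := rfl
@[simp] lemma redH_eq (p : Plant NS NC) : redH NS NC p = 0 := rfl
@[simp] lemma redFix_eq (p p' : Plant NS NC) : redFix NS NC p p' = 0 := rfl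
@[simp] lemma redR_ll (j j' : Fin NS) :
    redR NS NC q v (Sum.inl j) (Sum.inl j') = Omega NS NC q v := rfl
@[simp] lemma redR_lr (j : Fin NS) (l : Fin NC) :
    redR NS NC q v (Sum.inl j) (Sum.inr l) = v l j := rfl
@[simp] lemma redR_rl (l : Fin NC) (j : Fin NS) :
    redR NS NC q v (Sum.inr l) (Sum.inl j) = Omega NS NC q v := rfl
@[simp] lemma redR_rr (l l' : Fin NC) :
    redR NS NC q v (Sum.inr l) (Sum.inr l') = Omega NS NC q v := rfl

end Red

/-- forward witness flow -/
def fwdW {NS NC : ℕ} (a : Fin NC → Fin NS) : Plant NS NC → Plant NS NC → ℝ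
  | Sum.inl j, Sum.inr l => if a l = j then 1 else 0
  | _, _ => 0

section Fwd

variable {NS NC : ℕ} {a : Fin NC → Fin NS}

@[simp] lemma fwdW_ll (j j' : Fin NS) : fwdW a (Sum.inl j) (Sum.inl j') = 0 := rfl
@[simp] lemma fwdW_lr (j : Fin NS) (l : Fin NC) :
    fwdW a (Sum.inl j) (Sum.inr l) = if a l = j then 1 else 0 := rfl
@[simp] lemma fwdW_rl (l : Fin NC) (j : Fin NS) : fwdW a (Sum.inr l) (Sum.inl j) = 0 := rfl
@[simp] lemma fwdW_rr (l l' : Fin NC) : fwdW a (Sum.inr l) (Sum.inr l') = 0 := rfl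

end Fwd

lemma forward_dir (NS NC : ℕ) (q : Fin NS → ℝ) (v : Fin NC → Fin NS → ℝ)
    (S' : Finset (Fin NS)) (a : Fin NC → Fin NS) (ha : ∀ l, a l ∈ S') :
    ∃ (x s : Plant NS NC → ℝ) (w : Plant NS NC → Plant NS NC → ℝ)
        (y : Plant NS NC → ℝ) (Y : Plant NS NC → Plant NS NC → ℝ),
      umplsFeasible (redD NS NC) x s w y Y ∧
        umplsCost (redC NS NC q v) (redF NS NC q v) (redH NS NC)
          (redR NS NC q v) (redFix NS NC) x s w y Y = uflCost NS NC q v S' a := by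
  classical
  set x : Plant NS NC → ℝ :=
    Sum.elim (fun j => ∑ l, if a l = j then (1:ℝ) else 0) (fun _ => 0) with hxdef
  set y : Plant NS NC → ℝ :=
    Sum.elim (fun j => if j ∈ S' then (1:ℝ) else 0) (fun _ => 0) with hydef
  have hdiag : ∀ p, fwdW a p p = 0 := by rintro (j | l) <;> rfl
  refine ⟨x, fun _ => 0, fwdW a, y, fwdW a,
    ⟨?_, ?_, ?_, hdiag, ?_, ?_, ?_, ?_, ?_⟩, ?_⟩
  · rintro (j | l) <;> simp [hxdef]
  · exact fun p => le_refl 0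
  · rintro (j | l) (j' | l') <;> simp <;> positivity
  · rintro (j | l)
    · rw [sum_erase_eq_sum (fun p' => fwdW a p' (Sum.inl j)) _ (hdiag _),
        sum_erase_eq_sum (fun p' => fwdW a (Sum.inl j) p') _ (hdiag _),
        Fintype.sum_sum_type, Fintype.sum_sum_type]
      simp [hxdef]
    · rw [sum_erase_eq_sum (fun p' => fwdW a p' (Sum.inr l)) _ (hdiag _),
        sum_erase_eq_sum (fun p' => fwdW a (Sum.inr l) p') _ (hdiag _),
        Fintype.sum_sum_type, Fintype.sum_sum_type]
      simp [hxdef]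
  · rintro (j | l) <;> simp [hydef] <;> tauto
  · rintro (j | l) (j' | l') <;> simp <;> tauto
  · rintro (j | l) hp
    · have hex : ∃ l, a l = j := by
        by_contra hno
        push_neg at hno
        have hx0 : x (Sum.inl j) = 0 := by
          simp only [hxdef, Sum.elim_inl]
          exact Finset.sum_eq_zero fun l _ => by simp [hno l]
        rw [hx0] at hp; exact lt_irrefl _ hp
      obtain ⟨l, hl⟩ := hex
      have : j ∈ S' := hl ▸ ha l
      simp [hydef, this]
    · simp [hxdef] at hp
  · rintro (j | l) (j' | l') hp <;> simp at hp ⊢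
    by_contra hne
    simp [hne] at hp
  · -- cost
    unfold umplsCost uflCost
    have h2 : ∀ p : Plant NS NC,
        (∑ l ∈ univ.erase p, (redR NS NC q v p l * fwdW a p l
            + redFix NS NC p l * fwdW a p l))
          = ∑ l, redR NS NC q v p l * fwdW a p l := by
      intro p
      simp only [redFix_eq, zero_mul, add_zero]
      exact sum_erase_eq_sum _ _ (by rw [hdiag p]; ring)
    rw [Finset.sum_congr rfl fun p _ => h2 p]
    have hsw : (∑ j, ∑ l, if a l = j then v l j else 0) = ∑ l, v l (a l) := by
      rw [Finset.sum_comm]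
      simp [Finset.sum_ite_eq]
    simp [hxdef, hydef, Fintype.sum_sum_type, mul_ite, Finset.sum_ite_mem]
    exact hsw

lemma backward_dir (NS NC : ℕ) (q : Fin NS → ℝ) (v : Fin NC → Fin NS → ℝ)
    (hq : ∀ j, 0 ≤ q j) (hv : ∀ l j, 0 ≤ v l j)
    (K'' : ℝ) (hK : K'' < Omega NS NC q v)
    (x s : Plant NS NC → ℝ) (w : Plant NS NC → Plant NS NC → ℝ)
    (y : Plant NS NC → ℝ) (Y : Plant NS NC → Plant NS NC → ℝ)
    (hfeas : umplsFeasible (redD NS NC) x s w y Y)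
    (hcost : umplsCost (redC NS NC q v) (redF NS NC q v) (redH NS NC)
          (redR NS NC q v) (redFix NS NC) x s w y Y ≤ K'') :
    ∃ (S' : Finset (Fin NS)) (a : Fin NC → Fin NS),
      (∀ l, a l ∈ S') ∧ uflCost NS NC q v S' a ≤ K'' := by
  classical
  obtain ⟨hx, hs, hw, hdiag, hbal, hy01, hY01, hxy, hwY⟩ := hfeas
  have hΩ0 : 0 ≤ Omega NS NC q v := omega_nonneg hq hv
  unfold umplsCost at hcost
  set A := ∑ p, (redC NS NC q v p * x p + redF NS NC q v p * y p + redH NS NC p * s p)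
    with hAdef
  set B := ∑ p, ∑ l ∈ univ.erase p,
      (redR NS NC q v p l * w p l + redFix NS NC p l * Y p l) with hBdef
  have hy0 : ∀ p, 0 ≤ y p := by
    intro p; rcases hy01 p with h | h <;> rw [h] <;> norm_num
  have htA : ∀ p, 0 ≤ redC NS NC q v p * x p + redF NS NC q v p * y p
      + redH NS NC p * s p := by
    rintro (j | l)
    · simp only [redC_inl, redF_inl, redH_eq, zero_mul, zero_add, add_zero]
      exact mul_nonneg (hq j) (hy0 _)
    · simp only [redC_inr, redF_inr, redH_eq, zero_mul, add_zero]
      exact add_nonneg (mul_nonneg hΩ0 (hx _)) (mul_nonneg hΩ0 (hy0 _))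
  have hr0 : ∀ p p', 0 ≤ redR NS NC q v p p' := by
    rintro (j | l) (j' | l') <;>
      simp only [redR_ll, redR_lr, redR_rl, redR_rr] <;>
      first | exact hΩ0 | exact hv _ _
  have hA0 : 0 ≤ A := Finset.sum_nonneg fun p _ => htA p
  have hB0 : 0 ≤ B := by
    refine Finset.sum_nonneg fun p _ => Finset.sum_nonneg fun l _ => ?_
    simp only [redFix_eq, zero_mul, add_zero]
    exact mul_nonneg (hr0 p l) (hw p l)
  have hK0 : 0 ≤ K'' := le_trans (add_nonneg hA0 hB0) hcost
  have hΩpos : 0 < Omega NS NC q v := lt_of_le_of_lt hK0 hK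
  -- no client opens production
  have hyc : ∀ l, y (Sum.inr l) = 0 := by
    intro l
    rcases hy01 (Sum.inr l) with h | h
    · exact h
    · exfalso
      have h1 : Omega NS NC q v ≤ redC NS NC q v (Sum.inr l) * x (Sum.inr l)
          + redF NS NC q v (Sum.inr l) * y (Sum.inr l)
          + redH NS NC (Sum.inr l) * s (Sum.inr l) := by
        simp only [redC_inr, redF_inr, redH_eq, h, mul_one, zero_mul, add_zero]
        nlinarith [mul_nonneg hΩ0 (hx (Sum.inr l))]
      have h2 : redC NS NC q v (Sum.inr l) * x (Sum.inr l)
          + redF NS NC q v (Sum.inr l) * y (Sum.inr l)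
          + redH NS NC (Sum.inr l) * s (Sum.inr l) ≤ A :=
        Finset.single_le_sum (fun p _ => htA p) (mem_univ _)
      linarith
  have hxc : ∀ l, x (Sum.inr l) = 0 := by
    intro l
    rcases lt_or_eq_of_le (hx (Sum.inr l)) with h | h
    · have h1 := hxy _ h
      rw [hyc l] at h1
      norm_num at h1
    · exact h.symm
  -- balance with full sums
  have hbal' : ∀ p, x p + ∑ p', w p' p = s p + ∑ p', w p p' + redD NS NC p := by
    intro p
    have hb := hbal p
    rwa [sum_erase_eq_sum (fun p' => w p' p) _ (hdiag p),
      sum_erase_eq_sum (fun p' => w p p') _ (hdiag p)] at hb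
  set S' := univ.filter (fun j => y (Sum.inl j) = 1) with hS'def
  -- the value of A
  have hAval : A = ∑ j ∈ S', q j := by
    rw [hAdef, Fintype.sum_sum_type, hS'def, Finset.sum_filter]
    have h1 : ∀ j : Fin NS, redC NS NC q v (Sum.inl j) * x (Sum.inl j)
        + redF NS NC q v (Sum.inl j) * y (Sum.inl j)
        + redH NS NC (Sum.inl j) * s (Sum.inl j)
        = (if y (Sum.inl j) = 1 then q j else 0) := by
      intro j
      rcases hy01 (Sum.inl j) with h | h <;> simp [h]
    have h2 : ∀ l : Fin NC, redC NS NC q v (Sum.inr l) * x (Sum.inr l)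
        + redF NS NC q v (Sum.inr l) * y (Sum.inr l)
        + redH NS NC (Sum.inr l) * s (Sum.inr l) = 0 := by
      intro l; simp [hyc l, hxc l]
    rw [Finset.sum_congr rfl fun j _ => h1 j, Finset.sum_congr rfl fun l _ => h2 l]
    simp
  -- the value of B
  set Bgood := ∑ j, ∑ l, v l j * w (Sum.inl j) (Sum.inr l) with hBgooddef
  set Bff := ∑ j : Fin NS, ∑ j' : Fin NS, w (Sum.inl j) (Sum.inl j') with hBffdef
  set Bcf := ∑ l : Fin NC, ∑ j : Fin NS, w (Sum.inr l) (Sum.inl j) with hBcfdef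
  set Bcc := ∑ l : Fin NC, ∑ l' : Fin NC, w (Sum.inr l) (Sum.inr l') with hBccdef
  have hBval : B = Bgood + Omega NS NC q v * (Bff + Bcf + Bcc) := by
    rw [hBdef]
    have h1 : ∀ p : Plant NS NC, ∑ l ∈ univ.erase p,
        (redR NS NC q v p l * w p l + redFix NS NC p l * Y p l)
        = ∑ p', redR NS NC q v p p' * w p p' := by
      intro p
      simp only [redFix_eq, zero_mul, add_zero]
      exact sum_erase_eq_sum _ _ (by rw [hdiag p, mul_zero])
    rw [Finset.sum_congr rfl fun p _ => h1 p, Fintype.sum_sum_type]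
    have h2 : ∀ j : Fin NS, (∑ p', redR NS NC q v (Sum.inl j) p' * w (Sum.inl j) p')
        = (∑ j', Omega NS NC q v * w (Sum.inl j) (Sum.inl j'))
          + ∑ l, v l j * w (Sum.inl j) (Sum.inr l) := by
      intro j; rw [Fintype.sum_sum_type]; simp
    have h3 : ∀ l : Fin NC, (∑ p', redR NS NC q v (Sum.inr l) p' * w (Sum.inr l) p')
        = (∑ j, Omega NS NC q v * w (Sum.inr l) (Sum.inl j))
          + ∑ l', Omega NS NC q v * w (Sum.inr l) (Sum.inr l') := by
      intro l; rw [Fintype.sum_sum_type]; simp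
    rw [Finset.sum_congr rfl fun j _ => h2 j, Finset.sum_congr rfl fun l _ => h3 l]
    simp only [Finset.sum_add_distrib, ← Finset.mul_sum]
    rw [hBgooddef, hBffdef, hBcfdef, hBccdef]
    ring
  -- client inflow pieces
  set Gop := fun l : Fin NC => ∑ j ∈ S', w (Sum.inl j) (Sum.inr l) with hGopdef
  set Gcl := fun l : Fin NC => ∑ j ∈ univ.filter (fun j => ¬ y (Sum.inl j) = 1),
      w (Sum.inl j) (Sum.inr l) with hGcldef
  set β := fun l : Fin NC => ∑ l' : Fin NC, w (Sum.inr l') (Sum.inr l) with hβdef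
  have hin : ∀ l, 1 ≤ Gop l + Gcl l + β l := by
    intro l
    have hb := hbal' (Sum.inr l)
    rw [hxc l, redD_inr, Fintype.sum_sum_type] at hb
    have hsplit : Gop l + Gcl l = ∑ j, w (Sum.inl j) (Sum.inr l) := by
      rw [hGopdef, hGcldef, hS'def]
      exact Finset.sum_filter_add_sum_filter_not univ _ _
    have hout : 0 ≤ ∑ p', w (Sum.inr l) p' := Finset.sum_nonneg fun p' _ => hw _ _
    have hsl : 0 ≤ s (Sum.inr l) := hs _
    rw [hβdef]
    simp only at hb ⊢
    linarith [hb, hsplit]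
  -- closed facilities forward at most their (bad-arc) inflow
  have hGcl_total : (∑ l, Gcl l) ≤ Bff + Bcf := by
    have hclosed : ∀ j ∈ univ.filter (fun j => ¬ y (Sum.inl j) = 1),
        (∑ l, w (Sum.inl j) (Sum.inr l)) ≤ ∑ p', w p' (Sum.inl j) := by
      intro j hj
      rw [Finset.mem_filter] at hj
      have hyj : y (Sum.inl j) = 0 := by
        rcases hy01 (Sum.inl j) with h | h
        · exact h
        · exact absurd h hj.2
      have hxj : x (Sum.inl j) = 0 := by
        rcases lt_or_eq_of_le (hx (Sum.inl j)) with h | h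
        · have h1 := hxy _ h; rw [hyj] at h1; norm_num at h1
        · exact h.symm
      have hb := hbal' (Sum.inl j)
      rw [hxj, redD_inl, add_zero, zero_add] at hb
      have houtsplit : (∑ p', w (Sum.inl j) p')
          = (∑ j', w (Sum.inl j) (Sum.inl j')) + ∑ l, w (Sum.inl j) (Sum.inr l) :=
        Fintype.sum_sum_type _
      have h1 : 0 ≤ ∑ j', w (Sum.inl j) (Sum.inl j') :=
        Finset.sum_nonneg fun _ _ => hw _ _
      have h2 : 0 ≤ s (Sum.inl j) := hs _
      linarith [hb, houtsplit]
    have hcomm : (∑ l, Gcl l) = ∑ j ∈ univ.filter (fun j => ¬ y (Sum.inl j) = 1),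
        ∑ l, w (Sum.inl j) (Sum.inr l) := by
      rw [hGcldef]
      exact Finset.sum_comm
    have hsub : (∑ j ∈ univ.filter (fun j => ¬ y (Sum.inl j) = 1),
          ∑ p', w p' (Sum.inl j)) ≤ ∑ j, ∑ p', w p' (Sum.inl j) :=
      Finset.sum_le_sum_of_subset_of_nonneg (Finset.filter_subset _ _)
        (fun j _ _ => Finset.sum_nonneg fun p' _ => hw _ _)
    have hINfac : (∑ j, ∑ p', w p' (Sum.inl j)) = Bff + Bcf := by
      have h1 : ∀ j : Fin NS, (∑ p', w p' (Sum.inl j))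
          = (∑ j', w (Sum.inl j') (Sum.inl j)) + ∑ l, w (Sum.inr l) (Sum.inl j) :=
        fun j => Fintype.sum_sum_type _
      rw [Finset.sum_congr rfl fun j _ => h1 j, Finset.sum_add_distrib,
        hBffdef, hBcfdef]
      exact congrArg₂ (· + ·) Finset.sum_comm Finset.sum_comm
    calc (∑ l, Gcl l) = _ := hcomm
      _ ≤ ∑ j ∈ univ.filter (fun j => ¬ y (Sum.inl j) = 1), ∑ p', w p' (Sum.inl j) :=
          Finset.sum_le_sum hclosed
      _ ≤ ∑ j, ∑ p', w p' (Sum.inl j) := hsub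
      _ = Bff + Bcf := hINfac
  have hβ_total : (∑ l, β l) = Bcc := by
    rw [hβdef, hBccdef]
    exact Finset.sum_comm
  -- total deficit
  have hGcl0 : ∀ l, 0 ≤ Gcl l := fun l => Finset.sum_nonneg fun _ _ => hw _ _
  have hβ0 : ∀ l, 0 ≤ β l := fun l => Finset.sum_nonneg fun _ _ => hw _ _
  have hGop0 : ∀ l, 0 ≤ Gop l := fun l => Finset.sum_nonneg fun _ _ => hw _ _
  have hBgood0 : 0 ≤ Bgood := Finset.sum_nonneg fun j _ =>
    Finset.sum_nonneg fun l _ => mul_nonneg (hv _ _) (hw _ _)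
  have hBbadK : Omega NS NC q v * (Bff + Bcf + Bcc) ≤ K'' := by
    have := hcost
    rw [hBval] at this
    linarith
  have hBbad0 : 0 ≤ Bff + Bcf + Bcc := by
    have h1 : 0 ≤ Bff := Finset.sum_nonneg fun _ _ => Finset.sum_nonneg fun _ _ => hw _ _
    have h2 : 0 ≤ Bcf := Finset.sum_nonneg fun _ _ => Finset.sum_nonneg fun _ _ => hw _ _
    have h3 : 0 ≤ Bcc := Finset.sum_nonneg fun _ _ => Finset.sum_nonneg fun _ _ => hw _ _
    linarith
  have hBbad_lt1 : Bff + Bcf + Bcc < 1 := by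
    nlinarith
  have hD : (∑ l, (Gcl l + β l)) ≤ Bff + Bcf + Bcc := by
    rw [Finset.sum_add_distrib]
    linarith [hGcl_total, hβ_total.le, hβ_total.ge]
  have hdl : ∀ l, Gcl l + β l ≤ Bff + Bcf + Bcc := by
    intro l
    calc Gcl l + β l ≤ ∑ l', (Gcl l' + β l') :=
          Finset.single_le_sum (fun l' _ => add_nonneg (hGcl0 l') (hβ0 l')) (mem_univ l)
      _ ≤ _ := hD
  have hGop_pos : ∀ l, 0 < Gop l := by
    intro l
    have := hin l
    have := hdl l
    linarith
  -- choose assignment: cheapest open facility with positive flow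
  have hmin : ∀ l : Fin NC, ∃ j, (j ∈ S' ∧ 0 < w (Sum.inl j) (Sum.inr l)) ∧
      ∀ j' ∈ S', 0 < w (Sum.inl j') (Sum.inr l) → v l j ≤ v l j' := by
    intro l
    have hpos : (∑ j ∈ S', (0:ℝ)) < ∑ j ∈ S', w (Sum.inl j) (Sum.inr l) := by
      rw [Finset.sum_const_zero]
      exact hGop_pos l
    obtain ⟨j0, hj0S, hj0⟩ := Finset.exists_lt_of_sum_lt hpos
    have hne : (S'.filter (fun j => 0 < w (Sum.inl j) (Sum.inr l))).Nonempty :=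
      ⟨j0, Finset.mem_filter.mpr ⟨hj0S, hj0⟩⟩
    obtain ⟨j1, hj1mem, hj1min⟩ := Finset.exists_min_image _ (fun j => v l j) hne
    rw [Finset.mem_filter] at hj1mem
    refine ⟨j1, ⟨hj1mem.1, hj1mem.2⟩, fun j' hj'S hj'w => ?_⟩
    exact hj1min j' (Finset.mem_filter.mpr ⟨hj'S, hj'w⟩)
  choose a hamem hamin using hmin
  refine ⟨S', a, fun l => (hamem l).1, ?_⟩
  -- per-client service cost bound
  have hvmax0 : 0 ≤ ⨆ l, ⨆ j, v l j :=
    Real.iSup_nonneg fun l => Real.iSup_nonneg (hv l)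
  have hvmaxΩ : (⨆ l, ⨆ j, v l j) ≤ Omega NS NC q v := vmax_le_omega hq hv
  have hclient : ∀ l, v l (a l) ≤ (∑ j, v l j * w (Sum.inl j) (Sum.inr l))
      + (⨆ l, ⨆ j, v l j) * (Gcl l + β l) := by
    intro l
    have h1 : v l (a l) * Gop l ≤ ∑ j ∈ S', v l j * w (Sum.inl j) (Sum.inr l) := by
      rw [hGopdef]
      simp only
      rw [Finset.mul_sum]
      refine Finset.sum_le_sum fun j hj => ?_
      rcases lt_or_eq_of_le (hw (Sum.inl j) (Sum.inr l)) with hwp | hwp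
      · exact mul_le_mul_of_nonneg_right (hamin l j hj hwp) hwp.le
      · rw [← hwp, mul_zero, mul_zero]
    have h2 : (∑ j ∈ S', v l j * w (Sum.inl j) (Sum.inr l))
        ≤ ∑ j, v l j * w (Sum.inl j) (Sum.inr l) :=
      Finset.sum_le_sum_of_subset_of_nonneg (Finset.subset_univ _)
        (fun j _ _ => mul_nonneg (hv _ _) (hw _ _))
    have h3 : 1 - Gop l ≤ Gcl l + β l := by linarith [hin l]
    have h6 : 0 ≤ Gcl l + β l := add_nonneg (hGcl0 l) (hβ0 l)
    have h7 : v l (a l) * (1 - Gop l) ≤ v l (a l) * (Gcl l + β l) :=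
      mul_le_mul_of_nonneg_left h3 (hv _ _)
    have h8 : v l (a l) * (Gcl l + β l) ≤ (⨆ l, ⨆ j, v l j) * (Gcl l + β l) :=
      mul_le_mul_of_nonneg_right (v_le_vmax l (a l)) h6
    have h9 : v l (a l) = v l (a l) * Gop l + v l (a l) * (1 - Gop l) := by ring
    linarith
  have hsumv : (∑ l, v l (a l)) ≤ Bgood
      + (⨆ l, ⨆ j, v l j) * ∑ l, (Gcl l + β l) := by
    calc (∑ l, v l (a l))
        ≤ ∑ l, ((∑ j, v l j * w (Sum.inl j) (Sum.inr l))
            + (⨆ l, ⨆ j, v l j) * (Gcl l + β l)) :=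
          Finset.sum_le_sum fun l _ => hclient l
      _ = (∑ l, ∑ j, v l j * w (Sum.inl j) (Sum.inr l))
            + (⨆ l, ⨆ j, v l j) * ∑ l, (Gcl l + β l) := by
          rw [Finset.sum_add_distrib, Finset.mul_sum]
      _ = Bgood + (⨆ l, ⨆ j, v l j) * ∑ l, (Gcl l + β l) := by
          rw [hBgooddef]
          exact congrArg₂ (· + ·) Finset.sum_comm rfl
  have hD0 : 0 ≤ ∑ l, (Gcl l + β l) :=
    Finset.sum_nonneg fun l _ => add_nonneg (hGcl0 l) (hβ0 l)
  have hfinal : (⨆ l, ⨆ j, v l j) * (∑ l, (Gcl l + β l))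
      ≤ Omega NS NC q v * (Bff + Bcf + Bcc) := by
    calc (⨆ l, ⨆ j, v l j) * (∑ l, (Gcl l + β l))
        ≤ Omega NS NC q v * (∑ l, (Gcl l + β l)) :=
          mul_le_mul_of_nonneg_right hvmaxΩ hD0
      _ ≤ Omega NS NC q v * (Bff + Bcf + Bcc) :=
          mul_le_mul_of_nonneg_left hD hΩ0
  unfold uflCost
  have hBge : Bgood + Omega NS NC q v * (Bff + Bcf + Bcc) = B := hBval.symm
  linarith [hsumv, hfinal, hcost, hAval.ge, hAval.le]


/-- Theorem 1, correctness of the reduction UFL ∝ UMPLS: for every `K'' < Ω`,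
the UFL instance has a feasible solution of cost at most `K''` iff the constructed UMPLS
instance has a feasible solution of cost at most `K''`. -/
theorem stmt_5 (NS NC : ℕ) (q : Fin NS → ℝ) (v : Fin NC → Fin NS → ℝ)
    (hq : ∀ j, 0 ≤ q j) (hv : ∀ l j, 0 ≤ v l j)
    (K'' : ℝ) (hK : K'' < Omega NS NC q v) :
    (∃ (S' : Finset (Fin NS)) (a : Fin NC → Fin NS),
        (∀ l, a l ∈ S') ∧ uflCost NS NC q v S' a ≤ K'') ↔
    (∃ (x s : Plant NS NC → ℝ) (w : Plant NS NC → Plant NS NC → ℝ)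
        (y : Plant NS NC → ℝ) (Y : Plant NS NC → Plant NS NC → ℝ),
      umplsFeasible (redD NS NC) x s w y Y ∧
        umplsCost (redC NS NC q v) (redF NS NC q v) (redH NS NC)
          (redR NS NC q v) (redFix NS NC) x s w y Y ≤ K'') := by
  constructor
  · rintro ⟨S', a, ha, hc⟩
    obtain ⟨x, s, w, y, Y, hfeas, hceq⟩ := forward_dir NS NC q v S' a ha
    exact ⟨x, s, w, y, Y, hfeas, by rw [hceq]; exact hc⟩
  · rintro ⟨x, s, w, y, Y, hfeas, hc⟩
    exact backward_dir NS NC q v hq hv K'' hK x s w y Y hfeas hc
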